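/- Fix r ≥ 2 and partitions λ ⊆ μ. If the skew diagram μ/λ contains equally many cells of each color modulo r (i.e. for every i ∈ ℤ/rℤ, #{□∈μ/λ : c̄(□)=i} = #{□∈μ/λ : c̄(□)=0}), then core_r(λ) = core_r(μ). -/

import Mathlib

/-- Two cells are (edge-)adjacent. -/
def Adj (a b : ℕ × ℕ) : Prop :=
  (a.1 = b.1 ∧ (a.2 + 1 = b.2 ∨ b.2 + 1 = a.2)) ∨
  (a.2 = b.2 ∧ (a.1 + 1 = b.1 ∨ b.1 + 1 = a.1))

/-- A set of cells is connected (any two cells are joined by a path of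
edge-adjacent cells inside the set). -/
def ConnectedCells (s : Set (ℕ × ℕ)) : Prop :=
  ∀ x ∈ s, ∀ y ∈ s, Relation.ReflTransGen (fun a b => Adj a b ∧ a ∈ s ∧ b ∈ s) x y

/-- `ν` is obtained from `μ` by removing a ribbon (rim hook) of length `r`:
the skew shape `μ/ν` has `r` cells, is connected, and contains no 2×2 square. -/
def IsRibbonOf (r : ℕ) (μ ν : YoungDiagram) : Prop :=
  ν.cells ⊆ μ.cells ∧ (μ.cells \ ν.cells).card = r ∧
  ConnectedCells ((μ.cells : Set (ℕ × ℕ)) \ (ν.cells : Set (ℕ × ℕ))) ∧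
  ∀ i j : ℕ, ¬ ((i, j) ∈ μ.cells \ ν.cells ∧ (i + 1, j) ∈ μ.cells \ ν.cells ∧
      (i, j + 1) ∈ μ.cells \ ν.cells ∧ (i + 1, j + 1) ∈ μ.cells \ ν.cells)

/-- An `r`-core is a partition with no removable ribbon of length `r`. -/
def IsRCore (r : ℕ) (μ : YoungDiagram) : Prop := ∀ ν, ¬ IsRibbonOf r μ ν

/-- The beta-set of a partition. -/
def betaSet (μ : YoungDiagram) : Set ℤ :=
  {n | ∃ i : ℕ, n = (μ.rowLen i : ℤ) - (i + 1)}

/-- `ν` is the `r`-core of `μ`: it is reached from `μ` by successively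
removing `r`-ribbons, and has no `r`-ribbon left. -/
def ReachesCore (r : ℕ) (μ ν : YoungDiagram) : Prop :=
  Relation.ReflTransGen (fun a b => IsRibbonOf r a b) μ ν ∧ IsRCore r ν

/-- The total size `|quot_r(μ)|` of the `r`-quotient of `μ`, read off from the
Maya diagram: it is the number of pairs `(s, t)` with `s` in the beta-set,
`t` not in the beta-set, `t < s` and `s ≡ t (mod r)`. -/
noncomputable def quotTotal (r : ℕ) (μ : YoungDiagram) : ℕ :=
  {p : ℤ × ℤ | p.1 ∈ betaSet μ ∧ p.2 ∉ betaSet μ ∧ p.2 < p.1 ∧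
    (r : ℤ) ∣ (p.1 - p.2)}.ncard

/-- The color of a cell `(row, column)`: its content `row - column` mod `r`. -/
def cellColor (r : ℕ) (c : ℕ × ℕ) : ZMod r := (((c.1 : ℤ) - (c.2 : ℤ) : ℤ) : ZMod r)

/-!
Along a path of adjacent cells the content changes by `±1`, and a ribbon, having no `2 × 2`
square, never repeats a content. So the contents of an `r`-ribbon are `r` consecutive integers
and the ribbon meets every color exactly once: removing ribbons lowers all color counts
equally. Together with the balancing hypothesis, the color counts of the two cores differ by a
constant.

On the abacus side, row `x` contributes `[x ≡ a] - [x - λₓ ≡ a]` to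
`#(color a) - #(color (a + 1))`, so these differences count, runner by runner, the beads above a
common level. An `r`-core has no gap below a bead on any runner (sliding the bead down would
remove an `r`-ribbon), so its beta-set, hence the core, is determined by these counts.
-/


open Finset Relation

theorem StrictAnti.apply_add_add_le {f : ℕ → ℤ} (hf : StrictAnti f) (a d : ℕ) :
    f (a + d) + d ≤ f a := by
  induction d with
  | zero => simp
  | succ d ih =>
    have := hf (show a + d < a + (d + 1) by omega)
    push_cast
    omega

theorem Antitone.exists_lt_succ_le {f : ℕ → ℤ} (hf : Antitone f) {i : ℕ} {m : ℤ} (hi : m < f i)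
    (hex : ∃ j, f j ≤ m) : ∃ q, i ≤ q ∧ m < f q ∧ f (q + 1) ≤ m := by
  by_contra! h
  have hall : ∀ n, m < f (i + n) := fun n => by
    induction n with
    | zero => exact hi
    | succ n ih => exact h (i + n) (by omega) ih
  obtain ⟨j, hj⟩ := hex
  linarith [hall j, hf (show j ≤ i + j by omega)]

theorem Int.mem_of_le_of_dvd_sub {S : Set ℤ} {r : ℤ} (hS : ∀ s ∈ S, s - r ∈ S)
    {t u : ℤ} (ht : t ∈ S) (hut : u ≤ t) (hr : 0 ≤ r) (hdvd : r ∣ t - u) : u ∈ S := by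
  obtain ⟨d, hd⟩ := hdvd
  have hiter : ∀ k : ℕ, t - k * r ∈ S := by
    intro k
    induction k with
    | zero => simpa using ht
    | succ k ih => convert hS _ ih using 1; push_cast; ring
  convert hiter d.toNat using 1
  rcases le_or_gt 0 d with h | h
  · rw [Int.toNat_of_nonneg h]; linarith
  · rw [Int.toNat_of_nonpos h.le]; nlinarith

theorem Int.subset_of_forall_ncard_le {r : ℕ} {A B : Set ℤ} {m : ℤ}
    (hA : ∀ s ∈ A, s - r ∈ A) (hB : ∀ s ∈ B, s - r ∈ B) (hBm : ∀ t ≤ m, t ∈ B)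
    (hfin : (A ∩ Set.Ioi m).Finite)
    (hcount : ∀ ρ : ZMod r, {t ∈ A | m < t ∧ (t : ZMod r) = ρ}.ncard ≤
      {t ∈ B | m < t ∧ (t : ZMod r) = ρ}.ncard) : A ⊆ B := by
  intro t htA
  by_contra htB
  have hmt : m < t := by by_contra h; exact htB (hBm t (not_lt.1 h))
  have hssub : {u ∈ B | m < u ∧ (u : ZMod r) = t} ⊂ {u ∈ A | m < u ∧ (u : ZMod r) = t} := by
    refine Set.ssubset_iff_of_subset ?_ |>.2 ⟨t, ⟨htA, hmt, rfl⟩, fun h => htB h.1⟩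
    rintro u ⟨huB, hmu, hut⟩
    have hdvd := (ZMod.intCast_eq_intCast_iff_dvd_sub _ _ _).1 hut
    have hlt : u < t := by
      by_contra hle
      refine htB (Int.mem_of_le_of_dvd_sub hB huB (not_lt.1 hle) (by positivity) ?_)
      rw [← neg_sub]; exact hdvd.neg_right
    exact ⟨Int.mem_of_le_of_dvd_sub hA htA hlt.le (by positivity) hdvd, hmu, hut⟩
  have hfin' : {u ∈ A | m < u ∧ (u : ZMod r) = t}.Finite :=
    hfin.subset fun u hu => ⟨hu.1, hu.2.1⟩
  exact (Set.ncard_lt_ncard hssub hfin').not_ge (hcount t)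

theorem Adj.symm {a b : ℕ × ℕ} (h : Adj a b) : Adj b a := by
  unfold Adj at h ⊢
  omega

theorem reflTransGen_row {s : Set (ℕ × ℕ)} {x y y' : ℕ} (hy : y' ≤ y)
    (hs : ∀ z, y' ≤ z → z ≤ y → (x, z) ∈ s) :
    ReflTransGen (fun a b => Adj a b ∧ a ∈ s ∧ b ∈ s) (x, y) (x, y') := by
  induction y, hy using Nat.le_induction with
  | base => rfl
  | succ y hy ih =>
    refine .head ?_ (ih fun z h1 h2 => hs z h1 (by omega))
    exact ⟨Or.inl ⟨rfl, Or.inr rfl⟩, hs _ (by omega) le_rfl, hs y hy (by omega)⟩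

/-- Every cell is joined to `(q, G q)`: walk left along its row, step down into the next row,
and repeat. -/
theorem connectedCells_of_rows {s : Set (ℕ × ℕ)} {i q : ℕ} {G R : ℕ → ℤ}
    (hs : ∀ x y : ℕ, (x, y) ∈ s ↔ i ≤ x ∧ x ≤ q ∧ G x ≤ y ∧ (y : ℤ) < R x)
    (hG : Antitone G) (hG0 : 0 ≤ G q) (hGR : ∀ x, i ≤ x → x ≤ q → G x < R x)
    (hstep : ∀ x, i ≤ x → x < q → G x + 1 = R (x + 1)) : ConnectedCells s := by
  have hℓ : ∀ x, x ≤ q → ((G x).toNat : ℤ) = G x := fun x hx =>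
    Int.toNat_of_nonneg (hG0.trans (hG hx))
  have hrow : ∀ x y, (x, y) ∈ s → ReflTransGen (fun a b => Adj a b ∧ a ∈ s ∧ b ∈ s)
      (x, y) (x, (G x).toNat) := by
    intro x y hxy
    obtain ⟨hix, hxq, hGy, hyR⟩ := (hs x y).1 hxy
    have := hℓ x hxq
    exact reflTransGen_row (by omega) fun z h1 h2 => (hs x z).2 ⟨hix, hxq, by omega, by omega⟩
  have hdown : ∀ d x, x + d = q → i ≤ x → ReflTransGen (fun a b => Adj a b ∧ a ∈ s ∧ b ∈ s)
      (x, (G x).toNat) (q, (G q).toNat) := by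
    intro d
    induction d with
    | zero => intro x hx _; rw [← hx]; rfl
    | succ d ih =>
      intro x hx hix
      have h1 := hℓ x (by omega)
      have h2 := hstep x hix (by omega)
      have h3 := hG (show x ≤ x + 1 by omega)
      have h4 := hGR x hix (by omega)
      have hmem : (x + 1, (G x).toNat) ∈ s := (hs _ _).2 ⟨by omega, by omega, by omega, by omega⟩
      refine .head ?_ ((hrow _ _ hmem).trans (ih (x + 1) (by omega) (by omega)))
      exact ⟨Or.inr ⟨rfl, Or.inl rfl⟩, (hs _ _).2 ⟨hix, by omega, by omega, by omega⟩, hmem⟩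
  have hlast : ∀ c ∈ s, ReflTransGen (fun a b => Adj a b ∧ a ∈ s ∧ b ∈ s) c (q, (G q).toNat) := by
    rintro ⟨x, y⟩ hc
    obtain ⟨hix, hxq, -, -⟩ := (hs x y).1 hc
    exact (hrow x y hc).trans (hdown (q - x) x (by omega) hix)
  have : Std.Symm (fun a b => Adj a b ∧ a ∈ s ∧ b ∈ s) := ⟨fun _ _ h => ⟨h.1.symm, h.2.2, h.2.1⟩⟩
  exact fun a ha b hb => (hlast a ha).trans (symm_of _ (hlast b hb))

namespace YoungDiagram

def betaNum (μ : YoungDiagram) (i : ℕ) : ℤ := μ.rowLen i - (i + 1)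

theorem betaSet_eq_range (μ : YoungDiagram) : betaSet μ = Set.range μ.betaNum := by
  ext n
  simp [betaSet, betaNum, eq_comm]

theorem betaNum_mem_betaSet (μ : YoungDiagram) (i : ℕ) : μ.betaNum i ∈ betaSet μ :=
  (betaSet_eq_range μ).symm ▸ Set.mem_range_self i

theorem betaNum_strictAnti (μ : YoungDiagram) : StrictAnti μ.betaNum :=
  strictAnti_nat_of_succ_lt fun i => by
    have := μ.rowLen_anti i (i + 1) i.le_succ
    simp only [betaNum]
    push_cast
    omega

theorem neg_succ_le_betaNum (μ : YoungDiagram) (i : ℕ) : -(i + 1 : ℤ) ≤ μ.betaNum i := by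
  simp only [betaNum]
  omega

theorem betaNum_of_colLen_le {μ : YoungDiagram} {i : ℕ} (h : μ.colLen 0 ≤ i) :
    μ.betaNum i = -(i + 1) := by
  have : μ.rowLen i = 0 := by
    by_contra h'
    have := mem_iff_lt_colLen.1 (mem_iff_lt_rowLen.2 (Nat.pos_of_ne_zero h'))
    omega
  simp [betaNum, this]

theorem mem_betaSet_of_le {μ : YoungDiagram} {t : ℤ} (ht : t ≤ -(μ.colLen 0 : ℤ) - 1) :
    t ∈ betaSet μ := by
  have h := betaNum_of_colLen_le (μ := μ) (i := (-t - 1).toNat) (by omega)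
  rw [Int.toNat_of_nonneg (by omega)] at h
  rw [betaSet_eq_range]
  exact ⟨_, by rw [h]; ring⟩

theorem betaSet_inter_Ioi {μ : YoungDiagram} {N : ℕ} (hN : μ.colLen 0 ≤ N) :
    betaSet μ ∩ Set.Ioi (-(N : ℤ) - 1) = μ.betaNum '' Set.Iio N := by
  have hbN : μ.betaNum N = -(N : ℤ) - 1 := by rw [betaNum_of_colLen_le hN]; ring
  ext t
  simp only [betaSet_eq_range, Set.mem_inter_iff, Set.mem_range, Set.mem_Ioi, Set.mem_image,
    Set.mem_Iio]
  constructor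
  · rintro ⟨⟨x, rfl⟩, hx⟩
    exact ⟨x, (μ.betaNum_strictAnti.lt_iff_gt).1 (hbN ▸ hx), rfl⟩
  · rintro ⟨x, hx, rfl⟩
    exact ⟨⟨x, rfl⟩, hbN ▸ μ.betaNum_strictAnti hx⟩

theorem betaSet_injective : Function.Injective betaSet := by
  intro μ ν h
  have hneg : (fun i => -μ.betaNum i) = fun i => -ν.betaNum i := by
    refine (μ.betaNum_strictAnti.neg.range_inj ν.betaNum_strictAnti.neg).1 ?_
    change Set.range (Neg.neg ∘ μ.betaNum) = Set.range (Neg.neg ∘ ν.betaNum)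
    rw [Set.range_comp, Set.range_comp, ← betaSet_eq_range, ← betaSet_eq_range, h]
  have hrow : ∀ i, μ.rowLen i = ν.rowLen i := fun i => by
    have := congrFun hneg i
    simp only [betaNum, neg_inj] at this
    omega
  ext ⟨i, j⟩
  simp only [mem_cells, mem_iff_lt_rowLen, hrow]

def content (c : ℕ × ℕ) : ℤ := c.1 - c.2

theorem cellColor_eq (r : ℕ) (c : ℕ × ℕ) : cellColor r c = (content c : ZMod r) := rfl

theorem _root_.Adj.content_eq {p c : ℕ × ℕ} (h : Adj p c) :
    content c = content p + 1 ∨ content c = content p - 1 := by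
  obtain ⟨p1, p2⟩ := p
  obtain ⟨c1, c2⟩ := c
  simp only [content]
  rcases h with ⟨h1, h2 | h2⟩ | ⟨h1, h2 | h2⟩ <;> simp only at h1 h2 <;> omega

/-- Contents change by `±1` along a path of adjacent cells, so they take every intermediate
value. -/
theorem exists_content_eq_of_reflTransGen {s : Set (ℕ × ℕ)} {a b : ℕ × ℕ}
    (h : ReflTransGen (fun a b => Adj a b ∧ a ∈ s ∧ b ∈ s) a b) (hb : b ∈ s) {z : ℤ}
    (haz : content a ≤ z) (hzb : z ≤ content b) : ∃ d ∈ s, content d = z := by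
  induction h using ReflTransGen.head_induction_on with
  | refl => exact ⟨b, hb, by omega⟩
  | @head a c hac _ ih =>
    by_cases hza : z = content a
    · exact ⟨a, hac.2.1, hza.symm⟩
    · exact ih (by rcases hac.1.content_eq with h | h <;> omega)

theorem mem_sdiff_of_le {μ ν : YoungDiagram} {a b c : ℕ × ℕ} (ha : a ∈ μ.cells \ ν.cells)
    (hc : c ∈ μ.cells \ ν.cells) (hab : a ≤ b) (hbc : b ≤ c) : b ∈ μ.cells \ ν.cells := by
  simp only [mem_sdiff, mem_cells] at ha hc ⊢
  exact ⟨μ.isLowerSet hbc hc.1, fun hb => ha.2 (ν.isLowerSet hab hb)⟩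

def colorCount (r : ℕ) (μ : YoungDiagram) (a : ZMod r) : ℕ := #{c ∈ μ.cells | cellColor r c = a}

theorem colorCount_eq_add_card_sdiff {r : ℕ} {μ ν : YoungDiagram} (hsub : ν.cells ⊆ μ.cells)
    (a : ZMod r) :
    colorCount r μ a = colorCount r ν a + #{c ∈ μ.cells \ ν.cells | cellColor r c = a} := by
  have hsplit : {c ∈ μ.cells | cellColor r c = a} =
      {c ∈ ν.cells | cellColor r c = a} ∪ {c ∈ μ.cells \ ν.cells | cellColor r c = a} := by
    rw [← filter_union, union_sdiff_of_subset hsub]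
  rw [colorCount, colorCount, hsplit,
    card_union_of_disjoint (disjoint_filter_filter disjoint_sdiff)]

theorem sum_cells_eq_sum_rows {M : Type*} [AddCommMonoid M] (μ : YoungDiagram) {N : ℕ}
    (hN : μ.colLen 0 ≤ N) (g : ℕ × ℕ → M) :
    ∑ c ∈ μ.cells, g c = ∑ x ∈ range N, ∑ y ∈ range (μ.rowLen x), g (x, y) := by
  refine Finset.sum_finset_product _ _ _ fun ⟨x, y⟩ => ?_
  simp only [mem_cells, mem_range, ← mem_iff_lt_rowLen]
  refine ⟨fun h => ⟨?_, h⟩, And.right⟩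
  exact lt_of_lt_of_le (mem_iff_lt_colLen.1 (μ.up_left_mem le_rfl (Nat.zero_le y) h)) hN

/-- Within a row the colors run down consecutively, so the difference of the counts of two
consecutive colors telescopes to the colors at the two ends of the row. -/
theorem colorCount_sub_colorCount_add_one (r : ℕ) (μ : YoungDiagram) (a : ZMod r) {N : ℕ}
    (hN : μ.colLen 0 ≤ N) :
    (colorCount r μ a : ℤ) - colorCount r μ (a + 1) =
      #{x ∈ range N | ((x : ℕ) : ZMod r) = a} -
        #{x ∈ range N | (μ.betaNum x : ZMod r) = -1 - a} := by
  set χ : ℤ → ℤ := fun z => if (z : ZMod r) = a then 1 else 0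
  have hcount : ∀ b : ZMod r, (colorCount r μ b : ℤ) =
      ∑ c ∈ μ.cells, if cellColor r c = b then 1 else 0 := fun b => by
    rw [colorCount, natCast_card_filter]
  have hshift : ∀ c : ℕ × ℕ,
      (if cellColor r c = a + 1 then (1 : ℤ) else 0) = χ (content c - 1) := by
    intro c
    simp only [χ, cellColor_eq, Int.cast_sub, Int.cast_one, sub_eq_iff_eq_add]
    congr
  have hend : ∀ x : ℕ, χ (x - μ.rowLen x) = if (μ.betaNum x : ZMod r) = -1 - a then 1 else 0 := by
    intro x
    have : ((x : ℤ) - μ.rowLen x : ℤ) = -1 - μ.betaNum x := by simp only [betaNum]; ring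
    simp only [χ, this]
    congr 1
    push_cast
    apply propext
    constructor <;> intro h <;> linear_combination -h
  rw [hcount, hcount, ← sum_sub_distrib, sum_cells_eq_sum_rows μ hN]
  simp only [hshift]
  have hrow : ∀ x ∈ range N, ∑ y ∈ range (μ.rowLen x),
      ((if cellColor r (x, y) = a then (1 : ℤ) else 0) - χ (content (x, y) - 1)) =
      χ x - χ (x - μ.rowLen x) := by
    intro x _
    have := sum_range_sub' (fun y : ℕ => χ (x - y)) (μ.rowLen x)
    simp only [Nat.cast_zero, sub_zero, Nat.cast_succ] at this
    rw [← this]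
    refine sum_congr rfl fun y _ => ?_
    simp only [cellColor_eq, content, χ, sub_sub]
    congr
  rw [sum_congr rfl hrow, sum_sub_distrib]
  simp only [hend, natCast_card_filter, χ, Int.cast_natCast]

theorem card_filter_betaNum {μ : YoungDiagram} {N : ℕ} (hN : μ.colLen 0 ≤ N) (P : ℤ → Prop)
    [DecidablePred P] :
    #{x ∈ range N | P (μ.betaNum x)} = {t ∈ betaSet μ | -(N : ℤ) - 1 < t ∧ P t}.ncard := by
  have hset : {t ∈ betaSet μ | -(N : ℤ) - 1 < t ∧ P t} =
      μ.betaNum '' ↑({x ∈ range N | P (μ.betaNum x)} : Finset ℕ) := by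
    ext t
    have := Set.ext_iff.1 (betaSet_inter_Ioi hN) t
    simp only [Set.mem_inter_iff, Set.mem_Ioi, Set.mem_image, Set.mem_Iio] at this
    simp only [Set.mem_ofPred_eq, coe_filter, mem_range, Set.mem_image]
    constructor
    · rintro ⟨hβ, hlt, hP⟩
      obtain ⟨x, hx, rfl⟩ := this.1 ⟨hβ, hlt⟩
      exact ⟨x, ⟨hx, hP⟩, rfl⟩
    · rintro ⟨x, ⟨hx, hP⟩, rfl⟩
      exact ⟨(this.2 ⟨x, hx, rfl⟩).1, (this.2 ⟨x, hx, rfl⟩).2, hP⟩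
  rw [hset, Set.ncard_image_of_injective _ μ.betaNum_strictAnti.injective, Set.ncard_coe_finset]

def truncRows (μ : YoungDiagram) (G : ℕ → ℤ) (hG : Antitone G) : YoungDiagram where
  cells := {c ∈ μ.cells | (c.2 : ℤ) < G c.1}
  isLowerSet := by
    rintro ⟨a1, a2⟩ ⟨b1, b2⟩ ⟨h1 : b1 ≤ a1, h2 : b2 ≤ a2⟩ ha
    simp only [coe_filter, mem_cells, Set.mem_ofPred_eq] at ha ⊢
    exact ⟨μ.up_left_mem h1 h2 ha.1, by have := hG h1; omega⟩

theorem mem_truncRows {μ : YoungDiagram} {G : ℕ → ℤ} {hG : Antitone G} {c : ℕ × ℕ} :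
    c ∈ μ.truncRows G hG ↔ c ∈ μ ∧ (c.2 : ℤ) < G c.1 := by
  rw [← mem_cells]
  simp [truncRows]

theorem isRibbonOf_truncRows {r : ℕ} {μ : YoungDiagram} {G : ℕ → ℤ} (hG : Antitone G)
    {i q : ℕ} (hout : ∀ x, x < i ∨ q < x → G x = μ.rowLen x)
    (hstep : ∀ x, i ≤ x → x < q → G x + 1 = μ.rowLen (x + 1))
    (hlast : G q < μ.rowLen q) (hG0 : 0 ≤ G q)
    (hsum : ∑ x ∈ Icc i q, ((μ.rowLen x : ℤ) - G x) = r) :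
    IsRibbonOf r μ (μ.truncRows G hG) := by
  have hGR : ∀ x, i ≤ x → x ≤ q → G x < μ.rowLen x := fun x h1 h2 => by
    rcases h2.lt_or_eq with h2 | rfl
    · have := hstep x h1 h2
      have := μ.rowLen_anti x (x + 1) (by omega)
      omega
    · exact hlast
  have hskew : ∀ x y : ℕ, (x, y) ∈ μ.cells \ (μ.truncRows G hG).cells ↔
      i ≤ x ∧ x ≤ q ∧ G x ≤ y ∧ (y : ℤ) < μ.rowLen x := by
    intro x y
    rw [mem_sdiff, mem_cells, mem_cells, mem_truncRows, mem_iff_lt_rowLen]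
    simp only [not_and, not_lt]
    constructor
    · rintro ⟨hy, hGy⟩
      have hGy := hGy hy
      have hout' : ¬(x < i ∨ q < x) := fun h => by have := hout x h; omega
      exact ⟨by omega, by omega, hGy, by exact_mod_cast hy⟩
    · rintro ⟨-, -, h1, h2⟩
      exact ⟨by exact_mod_cast h2, fun _ => h1⟩
  refine ⟨fun c hc => (mem_filter.1 hc).1, ?_, ?_, ?_⟩
  · have hcard : #(μ.cells \ (μ.truncRows G hG).cells) =
        ∑ x ∈ Icc i q, #(Ico (G x).toNat (μ.rowLen x)) := by
      rw [card_eq_sum_ones, sum_finset_product _ (Icc i q) (fun x => Ico (G x).toNat (μ.rowLen x))]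
      · simp
      · rintro ⟨x, y⟩
        simp only [hskew, mem_Icc, mem_Ico, Int.toNat_le]
        omega
    rw [← Nat.cast_inj (R := ℤ), hcard, ← hsum, Nat.cast_sum]
    refine sum_congr rfl fun x hx => ?_
    obtain ⟨h1, h2⟩ := mem_Icc.1 hx
    have := hGR x h1 h2
    have := hG0.trans (hG h2)
    rw [Nat.card_Ico, Nat.cast_sub (by omega), Int.toNat_of_nonneg this]
  · refine connectedCells_of_rows (fun x y => ?_) hG hG0 hGR hstep
    rw [← coe_sdiff, mem_coe, hskew]
  · rintro x y ⟨h1, -, -, h4⟩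
    obtain ⟨hix, -, hGy, -⟩ := (hskew x y).1 h1
    obtain ⟨-, hxq, -, hyR⟩ := (hskew _ _).1 h4
    have := hstep x hix (by omega)
    push_cast at hyR
    omega

def ribbonProfile (μ : YoungDiagram) (i q : ℕ) (e : ℤ) (x : ℕ) : ℤ :=
  if x < i ∨ q < x then μ.rowLen x else if x < q then μ.rowLen (x + 1) - 1 else e

theorem antitone_ribbonProfile {μ : YoungDiagram} {i q : ℕ} {e : ℤ}
    (h1 : (μ.rowLen (q + 1) : ℤ) ≤ e) (h2 : e < μ.rowLen q) : Antitone (μ.ribbonProfile i q e) := by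
  have hR : ∀ x y, x ≤ y → (μ.rowLen y : ℤ) ≤ μ.rowLen x := fun x y h => by
    exact_mod_cast μ.rowLen_anti x y h
  refine antitone_nat_of_succ_le fun x => ?_
  have := hR x (x + 1) (by omega)
  have := hR (x + 1) (x + 1 + 1) (by omega)
  simp only [ribbonProfile]
  -- `omega` sees `rowLen q` and `rowLen (x + 1)` as unrelated atoms, so substitute `q` first.
  rcases eq_or_ne (x + 1) q with rfl | hx1
  · split_ifs <;> omega
  rcases eq_or_ne x q with rfl | hx <;> split_ifs <;> omega

theorem isRibbonOf_truncRows_ribbonProfile {r : ℕ} {μ : YoungDiagram} {i q : ℕ} {e : ℤ}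
    (hiq : i ≤ q) (h1 : (μ.rowLen (q + 1) : ℤ) ≤ e) (h2 : e < μ.rowLen q) (he : 0 ≤ e)
    (hr : (r : ℤ) = μ.rowLen i + q - i - e) :
    IsRibbonOf r μ (μ.truncRows _ (antitone_ribbonProfile (i := i) h1 h2)) := by
  have hmid : ∀ x, i ≤ x → x < q → μ.ribbonProfile i q e x = μ.rowLen (x + 1) - 1 :=
    fun x hx1 hx2 => by simp only [ribbonProfile]; rw [if_neg (by omega), if_pos hx2]
  have hlast : μ.ribbonProfile i q e q = e := by
    simp only [ribbonProfile]; rw [if_neg (by omega), if_neg (by omega)]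
  refine isRibbonOf_truncRows _ (fun x hx => if_pos hx)
    (fun x hx1 hx2 => by rw [hmid x hx1 hx2]; ring) (by rw [hlast]; exact h2) (by rw [hlast]; exact he) ?_
  have hsum : ∀ x ∈ Ico i q, (μ.rowLen x : ℤ) - μ.ribbonProfile i q e x =
      (-(μ.rowLen (x + 1) : ℤ) + ↑(x + 1)) - (-(μ.rowLen x : ℤ) + x) := fun x hx => by
    rw [hmid x (mem_Ico.1 hx).1 (mem_Ico.1 hx).2]; push_cast; ring
  rw [← Ico_add_one_right_eq_Icc, sum_Ico_succ_top hiq, sum_congr rfl hsum,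
    sum_Ico_sub (fun x => -(μ.rowLen x : ℤ) + x) hiq, hlast, hr]
  ring

/-- Moving the bead `s = betaNum μ i` down to the empty position `s - r` of the abacus removes
an `r`-ribbon. Its rows are those of the beads jumped over, `i, …, q`. -/
theorem exists_isRibbonOf_of_sub_notMem {r : ℕ} {μ : YoungDiagram} (i : ℕ)
    (hgap : μ.betaNum i - r ∉ betaSet μ) : ∃ ν, IsRibbonOf r μ ν := by
  set b := μ.betaNum
  have hb : StrictAnti b := μ.betaNum_strictAnti
  have hne : ∀ x, b x ≠ b i - r := fun x hx => hgap (hx ▸ μ.betaNum_mem_betaSet x)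
  have hr : 0 < r := Nat.pos_of_ne_zero fun h => hne i (by simp [h])
  obtain ⟨q, hiq, hq, hq1⟩ := hb.antitone.exists_lt_succ_le (m := b i - r) (i := i) (by omega)
    ⟨i + r, by linarith [hb.apply_add_add_le i r]⟩
  replace hq1 : b (q + 1) < b i - r := lt_of_le_of_ne hq1 (hne _)
  have hR : ∀ x, (μ.rowLen x : ℤ) = b x + x + 1 := fun x => by simp only [b, betaNum]; ring
  have hq2 : -((q + 1 : ℕ) + 1 : ℤ) ≤ b (q + 1) := μ.neg_succ_le_betaNum (q + 1)
  refine ⟨_, isRibbonOf_truncRows_ribbonProfile (e := b i - r + q + 1) hiq ?_ ?_ ?_ ?_⟩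
  · rw [hR]; push_cast; omega
  · rw [hR]; omega
  · push_cast at hq2; omega
  · rw [hR]; ring

end YoungDiagram

open YoungDiagram

namespace IsRibbonOf

variable {r : ℕ} {μ ν : YoungDiagram}

theorem content_injOn (h : IsRibbonOf r μ ν) : Set.InjOn content ↑(μ.cells \ ν.cells) := by
  rintro ⟨i, j⟩ hx ⟨i', j'⟩ hy hc
  simp only [content, mem_coe] at hc hx hy
  wlog hii : i ≤ i' generalizing i j i' j'
  · exact (this i' j' i j hc.symm hy hx (by omega)).symm
  rcases hii.eq_or_lt with rfl | hlt
  · simp only [Prod.mk.injEq, true_and]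
    omega
  · have hsq : ∀ a b : ℕ, a ≤ 1 → b ≤ 1 → (i + a, j + b) ∈ μ.cells \ ν.cells :=
      fun a b ha hb => mem_sdiff_of_le hx hy (by simp [Prod.le_def]) (by simp [Prod.le_def]; omega)
    exact absurd ⟨hsq 0 0 (by omega) (by omega), hsq 1 0 le_rfl (by omega),
      hsq 0 1 (by omega) le_rfl, hsq 1 1 le_rfl le_rfl⟩ (h.2.2.2 i j)

/-- The contents of a ribbon fill an interval, whose length is at most the size `r`. -/
theorem content_sub_lt (h : IsRibbonOf r μ ν) {x y : ℕ × ℕ} (hx : x ∈ μ.cells \ ν.cells)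
    (hy : y ∈ μ.cells \ ν.cells) : content x - content y < r := by
  have hsub : Icc (content y) (content x) ⊆ (μ.cells \ ν.cells).image content := by
    intro z hz
    rw [← mem_coe, coe_sdiff] at hx hy
    obtain ⟨d, hd, rfl⟩ := exists_content_eq_of_reflTransGen (h.2.2.1 y hy x hx) hx
      (mem_Icc.1 hz).1 (mem_Icc.1 hz).2
    exact mem_image_of_mem _ (by rwa [← mem_coe, coe_sdiff])
  have := (card_le_card hsub).trans card_image_le
  rw [Int.card_Icc, h.2.1] at this
  omega

theorem cellColor_injOn (h : IsRibbonOf r μ ν) : Set.InjOn (cellColor r) ↑(μ.cells \ ν.cells) := by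
  intro x hx y hy hxy
  refine h.content_injOn hx hy (sub_eq_zero.1 (Int.eq_zero_of_abs_lt_dvd (m := r) ?_ ?_))
  · exact (ZMod.intCast_eq_intCast_iff_dvd_sub _ _ _).1 hxy.symm
  · exact abs_sub_lt_iff.2 ⟨h.content_sub_lt hx hy, h.content_sub_lt hy hx⟩

theorem card_filter_cellColor_eq_one [NeZero r] (h : IsRibbonOf r μ ν) (a : ZMod r) :
    #{c ∈ μ.cells \ ν.cells | cellColor r c = a} = 1 := by
  have himage : (μ.cells \ ν.cells).image (cellColor r) = univ :=
    eq_univ_of_card _ (by rw [card_image_of_injOn h.cellColor_injOn, h.2.1, ZMod.card])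
  obtain ⟨c, hc, rfl⟩ := mem_image.1 (himage ▸ mem_univ a)
  refine card_eq_one.2 ⟨c, eq_singleton_iff_unique_mem.2 ⟨mem_filter.2 ⟨hc, rfl⟩, ?_⟩⟩
  exact fun d hd => h.cellColor_injOn (mem_filter.1 hd).1 hc (mem_filter.1 hd).2

theorem colorCount_eq_add_one [NeZero r] (h : IsRibbonOf r μ ν) (a : ZMod r) :
    colorCount r μ a = colorCount r ν a + 1 := by
  rw [colorCount_eq_add_card_sdiff h.1, h.card_filter_cellColor_eq_one]

end IsRibbonOf

theorem exists_colorCount_eq_add_of_reflTransGen {r : ℕ} [NeZero r] {μ ν : YoungDiagram}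
    (h : ReflTransGen (fun a b => IsRibbonOf r a b) μ ν) :
    ∃ k : ℕ, ∀ a, colorCount r μ a = colorCount r ν a + k := by
  induction h with
  | refl => exact ⟨0, fun a => rfl⟩
  | tail _ hbc ih =>
    obtain ⟨k, hk⟩ := ih
    exact ⟨k + 1, fun a => by rw [hk, hbc.colorCount_eq_add_one, add_assoc, add_comm 1]⟩

theorem IsRCore.sub_mem_betaSet {r : ℕ} {μ : YoungDiagram} (h : IsRCore r μ) {s : ℤ}
    (hs : s ∈ betaSet μ) : s - r ∈ betaSet μ := by
  rw [betaSet_eq_range] at hs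
  obtain ⟨i, rfl⟩ := hs
  by_contra hgap
  obtain ⟨ν, hν⟩ := exists_isRibbonOf_of_sub_notMem i hgap
  exact h ν hν

theorem IsRCore.betaSet_subset_of_ncard_le {r : ℕ} {A B : YoungDiagram} (hA : IsRCore r A)
    (hB : IsRCore r B) {N : ℕ} (hAN : A.colLen 0 ≤ N) (hBN : B.colLen 0 ≤ N)
    (h : ∀ ρ : ZMod r, {t ∈ betaSet A | -(N : ℤ) - 1 < t ∧ (t : ZMod r) = ρ}.ncard ≤
      {t ∈ betaSet B | -(N : ℤ) - 1 < t ∧ (t : ZMod r) = ρ}.ncard) :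
    betaSet A ⊆ betaSet B := by
  refine Int.subset_of_forall_ncard_le (fun _ => hA.sub_mem_betaSet) (fun _ => hB.sub_mem_betaSet)
    (fun t ht => mem_betaSet_of_le (by omega)) ?_ h
  rw [betaSet_inter_Ioi hAN]
  exact (Set.finite_Iio N).image _

theorem IsRCore.eq_of_colorCount_eq_add {r : ℕ} {A B : YoungDiagram} (hA : IsRCore r A)
    (hB : IsRCore r B) (k : ℤ) (h : ∀ a, (colorCount r A a : ℤ) = colorCount r B a + k) :
    A = B := by
  set N := max (A.colLen 0) (B.colLen 0)
  have hAN : A.colLen 0 ≤ N := le_max_left _ _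
  have hBN : B.colLen 0 ≤ N := le_max_right _ _
  have hwindow : ∀ ρ : ZMod r, {t ∈ betaSet A | -(N : ℤ) - 1 < t ∧ (t : ZMod r) = ρ}.ncard =
      {t ∈ betaSet B | -(N : ℤ) - 1 < t ∧ (t : ZMod r) = ρ}.ncard := fun ρ => by
    have hA' := colorCount_sub_colorCount_add_one r A (-1 - ρ) hAN
    have hB' := colorCount_sub_colorCount_add_one r B (-1 - ρ) hBN
    rw [sub_sub_cancel] at hA' hB'
    rw [← card_filter_betaNum hAN, ← card_filter_betaNum hBN]
    have := h (-1 - ρ)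
    have := h (-1 - ρ + 1)
    omega
  exact betaSet_injective <| subset_antisymm
    (hA.betaSet_subset_of_ncard_le hB hAN hBN fun ρ => (hwindow ρ).le)
    (hB.betaSet_subset_of_ncard_le hA hBN hAN fun ρ => (hwindow ρ).ge)

/-- If `λ ⊆ μ` and the skew diagram `μ/λ` has equally many cells of each color
mod `r`, then `λ` and `μ` have the same `r`-core. -/
theorem core_eq_of_balanced_skew (r : ℕ) (hr : 2 ≤ r) (lam mu : YoungDiagram)
    (hsub : lam.cells ⊆ mu.cells)
    (hbal : ∀ i : ZMod r,
      {c : ℕ × ℕ | c ∈ mu ∧ c ∉ lam ∧ cellColor r c = i}.ncard =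
        {c : ℕ × ℕ | c ∈ mu ∧ c ∉ lam ∧ cellColor r c = 0}.ncard)
    (clam cmu : YoungDiagram)
    (h1 : ReachesCore r lam clam) (h2 : ReachesCore r mu cmu) :
    clam = cmu := by
  have : NeZero r := ⟨by omega⟩
  obtain ⟨k₁, hk₁⟩ := exists_colorCount_eq_add_of_reflTransGen h1.1
  obtain ⟨k₂, hk₂⟩ := exists_colorCount_eq_add_of_reflTransGen h2.1
  set n := {c : ℕ × ℕ | c ∈ mu ∧ c ∉ lam ∧ cellColor r c = 0}.ncard
  have hskew : ∀ a, colorCount r mu a = colorCount r lam a + n := fun a => by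
    rw [colorCount_eq_add_card_sdiff hsub, ← hbal a, ← Set.ncard_coe_finset]
    congr
    ext c
    simp [and_assoc]
  refine h1.2.eq_of_colorCount_eq_add h2.2 (k₂ - k₁ - n) fun a => ?_
  have := hk₁ a
  have := hk₂ a
  have := hskew a
  omega
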